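/- arXiv:math/0308245 — 5 statements merged into one kernel-verified Lean document; each statement's English description precedes it below -/
import Mathlib

section
/- Let (Ω₁, μ₁) and (Ω₂, μ₂) be probability spaces, let H = L²(μ₁ ⊗ μ₂; ℂ) and let n ≥ 1. For all essentially bounded measurable functions f₁, …, fₙ : Ω₁ → ℂ and g₀, g₁, …, gₙ : Ω₂ → ℂ, the vector state φ(S) = ⟪𝟙, S 𝟙⟫ of the alternating operator product satisfies φ(M g₀ ∘ T f₁ ∘ M g₁ ∘ ⋯ ∘ T fₙ ∘ M gₙ) = (∏_{i=0}^{n} ∫ gᵢ dμ₂) · ∫ (f₁ ⋯ fₙ) dμ₁. (This is the defining moment factorization showing that the algebras {T f} and {M g} are monotone independent in φ.) -/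
open MeasureTheory
open scoped ENNReal

/-!
The words only ever meet vectors of the form `φ ⊗ 1`: on such a vector `M g` acts as `φ ⊗ g`,
and integrating out the second variable gives `T f (M g (φ ⊗ 1)) = (∫ g dμ₂) · (f φ ⊗ 1)`.
Hence, starting from `𝟙`, each factor `T fᵢ ∘ M gᵢ` of the word contributes the scalar
`∫ gᵢ dμ₂` and the function `fᵢ` on the first factor. The outermost `M g₀` and the pairing with
`𝟙` then give `(∫ g₀ dμ₂) · ∫ f₁⋯fₙ dμ₁` by Fubini for product integrands.
-/

namespace MonotoneIndependence

variable {Ω₁ Ω₂ : Type*} [MeasurableSpace Ω₁] [MeasurableSpace Ω₂]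
  {μ₁ : Measure Ω₁} {μ₂ : Measure Ω₂}

theorem ae_integral_snd_eq_of_ae_eq_mul [SFinite μ₂] {F : Ω₁ × Ω₂ → ℂ} {φ : Ω₁ → ℂ}
    {g : Ω₂ → ℂ} (hF : F =ᵐ[μ₁.prod μ₂] fun p => g p.2 * φ p.1) :
    ∀ᵐ p ∂μ₁.prod μ₂, ∫ y, F (p.1, y) ∂μ₂ = (∫ y, g y ∂μ₂) * φ p.1 := by
  have hfibre : ∀ᵐ x ∂μ₁, ∫ y, F (x, y) ∂μ₂ = (∫ y, g y ∂μ₂) * φ x := by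
    filter_upwards [Measure.ae_ae_of_ae_prod hF] with x hx
    rw [integral_congr_ae hx, integral_mul_const]
  exact Measure.quasiMeasurePreserving_fst.ae hfibre

variable {p : ℝ≥0∞} [Fact (1 ≤ p)]

theorem mul_apply_ae_eq_of_ae_eq_fst [SFinite μ₂] {f : Ω₁ → ℂ} {g : Ω₂ → ℂ}
    {T M : Lp ℂ p (μ₁.prod μ₂) →L[ℂ] Lp ℂ p (μ₁.prod μ₂)}
    (hT : ∀ h : Lp ℂ p (μ₁.prod μ₂), (T h : Ω₁ × Ω₂ → ℂ) =ᵐ[μ₁.prod μ₂]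
      fun q => f q.1 * ∫ y, (h : Ω₁ × Ω₂ → ℂ) (q.1, y) ∂μ₂)
    (hM : ∀ h : Lp ℂ p (μ₁.prod μ₂), (M h : Ω₁ × Ω₂ → ℂ) =ᵐ[μ₁.prod μ₂]
      fun q => g q.2 * (h : Ω₁ × Ω₂ → ℂ) q)
    {h : Lp ℂ p (μ₁.prod μ₂)} {φ : Ω₁ → ℂ} (hh : (h : Ω₁ × Ω₂ → ℂ) =ᵐ[μ₁.prod μ₂] φ ∘ Prod.fst) :
    ((T * M) h : Ω₁ × Ω₂ → ℂ) =ᵐ[μ₁.prod μ₂]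
      (fun x => (∫ y, g y ∂μ₂) * (f x * φ x)) ∘ Prod.fst := by
  have hMh : (M h : Ω₁ × Ω₂ → ℂ) =ᵐ[μ₁.prod μ₂] fun q => g q.2 * φ q.1 := by
    filter_upwards [hM h, hh] with q hq hhq
    rw [hq, hhq, Function.comp_apply]
  filter_upwards [hT (M h), ae_integral_snd_eq_of_ae_eq_mul hMh] with q hq hint
  rw [mul_apply_eq_comp, hq, hint, Function.comp_apply]
  ring

theorem ofFn_prod_apply_ae_eq_of_ae_eq_fst [SFinite μ₂] {n : ℕ} {f : Fin n → Ω₁ → ℂ}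
    {g : Fin (n + 1) → Ω₂ → ℂ} {T : Fin n → (Lp ℂ p (μ₁.prod μ₂) →L[ℂ] Lp ℂ p (μ₁.prod μ₂))}
    {M : Fin (n + 1) → (Lp ℂ p (μ₁.prod μ₂) →L[ℂ] Lp ℂ p (μ₁.prod μ₂))}
    (hT : ∀ i (h : Lp ℂ p (μ₁.prod μ₂)), (T i h : Ω₁ × Ω₂ → ℂ) =ᵐ[μ₁.prod μ₂]
      fun q => f i q.1 * ∫ y, (h : Ω₁ × Ω₂ → ℂ) (q.1, y) ∂μ₂)
    (hM : ∀ i (h : Lp ℂ p (μ₁.prod μ₂)), (M i h : Ω₁ × Ω₂ → ℂ) =ᵐ[μ₁.prod μ₂]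
      fun q => g i q.2 * (h : Ω₁ × Ω₂ → ℂ) q)
    {h : Lp ℂ p (μ₁.prod μ₂)} {φ : Ω₁ → ℂ} (hh : (h : Ω₁ × Ω₂ → ℂ) =ᵐ[μ₁.prod μ₂] φ ∘ Prod.fst) :
    ((List.ofFn fun i : Fin n => T i * M i.succ).prod h : Ω₁ × Ω₂ → ℂ) =ᵐ[μ₁.prod μ₂]
      (fun x => (∏ i : Fin n, ∫ y, g i.succ y ∂μ₂) * ((∏ i : Fin n, f i x) * φ x)) ∘ Prod.fst := by
  induction n with
  | zero => simpa using hh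
  | succ n ih =>
    have htail := ih (fun i => hT i.succ) (fun i => hM i.succ)
    filter_upwards [mul_apply_ae_eq_of_ae_eq_fst (hT 0) (hM 1) htail] with q hq
    rw [List.ofFn_succ, List.prod_cons, mul_apply_eq_comp]
    refine hq.trans ?_
    simp only [Function.comp_apply, Fin.prod_univ_succ, Fin.succ_zero_eq_one]
    ring

theorem inner_one_apply_of_ae_eq_fst [SFinite μ₁] [SFinite μ₂] {g : Ω₂ → ℂ}
    {M : Lp ℂ 2 (μ₁.prod μ₂) →L[ℂ] Lp ℂ 2 (μ₁.prod μ₂)}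
    (hM : ∀ h : Lp ℂ 2 (μ₁.prod μ₂), (M h : Ω₁ × Ω₂ → ℂ) =ᵐ[μ₁.prod μ₂]
      fun q => g q.2 * (h : Ω₁ × Ω₂ → ℂ) q)
    {one : Lp ℂ 2 (μ₁.prod μ₂)} (hone : (one : Ω₁ × Ω₂ → ℂ) =ᵐ[μ₁.prod μ₂] fun _ => 1)
    {h : Lp ℂ 2 (μ₁.prod μ₂)} {φ : Ω₁ → ℂ} (hh : (h : Ω₁ × Ω₂ → ℂ) =ᵐ[μ₁.prod μ₂] φ ∘ Prod.fst) :
    @inner ℂ _ _ one (M h) = (∫ y, g y ∂μ₂) * ∫ x, φ x ∂μ₁ := by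
  have hintegrand : (fun q => @inner ℂ _ _ ((one : Ω₁ × Ω₂ → ℂ) q) ((M h : Ω₁ × Ω₂ → ℂ) q))
      =ᵐ[μ₁.prod μ₂] fun q => φ q.1 * g q.2 := by
    filter_upwards [hone, hM h, hh] with q h1 hMq hhq
    rw [RCLike.inner_apply, h1, hMq, hhq, Function.comp_apply, map_one]
    ring
  rw [L2.inner_def, integral_congr_ae hintegrand, integral_prod_mul, mul_comm]

end MonotoneIndependence

open MonotoneIndependence in
theorem monotone_independence_moment_factorization_general
    {Ω₁ Ω₂ : Type*} [MeasurableSpace Ω₁] [MeasurableSpace Ω₂]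
    (μ₁ : Measure Ω₁) (μ₂ : Measure Ω₂) [IsProbabilityMeasure μ₁] [IsProbabilityMeasure μ₂]
    (n : ℕ)
    (f : Fin n → Ω₁ → ℂ) (g : Fin (n + 1) → Ω₂ → ℂ)
    (T : Fin n → (Lp ℂ 2 (μ₁.prod μ₂) →L[ℂ] Lp ℂ 2 (μ₁.prod μ₂)))
    (M : Fin (n + 1) → (Lp ℂ 2 (μ₁.prod μ₂) →L[ℂ] Lp ℂ 2 (μ₁.prod μ₂)))
    (hT : ∀ i (h : Lp ℂ 2 (μ₁.prod μ₂)), (T i h : Ω₁ × Ω₂ → ℂ) =ᵐ[μ₁.prod μ₂]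
      fun p => f i p.1 * ∫ y, (h : Ω₁ × Ω₂ → ℂ) (p.1, y) ∂μ₂)
    (hM : ∀ i (h : Lp ℂ 2 (μ₁.prod μ₂)), (M i h : Ω₁ × Ω₂ → ℂ) =ᵐ[μ₁.prod μ₂]
      fun p => g i p.2 * (h : Ω₁ × Ω₂ → ℂ) p)
    (one : Lp ℂ 2 (μ₁.prod μ₂)) (hone : (one : Ω₁ × Ω₂ → ℂ) =ᵐ[μ₁.prod μ₂] fun _ => 1) :
    @inner ℂ _ _ one
        ((M 0 * (List.ofFn fun i : Fin n => T i * M i.succ).prod) one)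
      = (∏ i : Fin (n + 1), ∫ x, g i x ∂μ₂) * ∫ x, ∏ i : Fin n, f i x ∂μ₁ := by
  rw [mul_apply_eq_comp, inner_one_apply_of_ae_eq_fst (hM 0) hone
    (ofFn_prod_apply_ae_eq_of_ae_eq_fst hT hM (φ := fun _ => 1) hone)]
  simp only [mul_one, integral_const_mul, Fin.prod_univ_succ (fun i => ∫ y, g i y ∂μ₂), mul_assoc]

/-- **Monotone independence moment factorization.** On `H = L²(μ₁ ⊗ μ₂; ℂ)` let `T i` be the
operator `h ↦ ((x₁,x₂) ↦ fᵢ(x₁)·∫ h(x₁,y) dμ₂(y))` (i.e. `fᵢ ⊗ |1⟩⟨1|`) and `M i` the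
multiplication operator by `(x₁,x₂) ↦ gᵢ(x₂)` (i.e. `id ⊗ gᵢ`), for essentially bounded
measurable `fᵢ`, `gᵢ`.  Then the vector state `φ(S) = ⟪𝟙, S 𝟙⟫` of the alternating word
`M g₀ ∘ T f₁ ∘ M g₁ ∘ ⋯ ∘ T fₙ ∘ M gₙ` equals `(∏ᵢ ∫ gᵢ dμ₂) · ∫ f₁⋯fₙ dμ₁`: the algebras
`{T f}` and `{M g}` are monotone independent in `φ`. -/
theorem monotone_independence_moment_factorization
    {Ω₁ Ω₂ : Type*} [MeasurableSpace Ω₁] [MeasurableSpace Ω₂]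
    (μ₁ : Measure Ω₁) (μ₂ : Measure Ω₂) [IsProbabilityMeasure μ₁] [IsProbabilityMeasure μ₂]
    (n : ℕ) (hn : 1 ≤ n)
    (f : Fin n → Ω₁ → ℂ) (g : Fin (n + 1) → Ω₂ → ℂ)
    (hfm : ∀ i, Measurable (f i)) (hfb : ∀ i, MemLp (f i) ⊤ μ₁)
    (hgm : ∀ i, Measurable (g i)) (hgb : ∀ i, MemLp (g i) ⊤ μ₂)
    (T : Fin n → (Lp ℂ 2 (μ₁.prod μ₂) →L[ℂ] Lp ℂ 2 (μ₁.prod μ₂)))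
    (M : Fin (n + 1) → (Lp ℂ 2 (μ₁.prod μ₂) →L[ℂ] Lp ℂ 2 (μ₁.prod μ₂)))
    (hT : ∀ i (h : Lp ℂ 2 (μ₁.prod μ₂)), (T i h : Ω₁ × Ω₂ → ℂ) =ᵐ[μ₁.prod μ₂]
      fun p => f i p.1 * ∫ y, (h : Ω₁ × Ω₂ → ℂ) (p.1, y) ∂μ₂)
    (hM : ∀ i (h : Lp ℂ 2 (μ₁.prod μ₂)), (M i h : Ω₁ × Ω₂ → ℂ) =ᵐ[μ₁.prod μ₂]
      fun p => g i p.2 * (h : Ω₁ × Ω₂ → ℂ) p)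
    (one : Lp ℂ 2 (μ₁.prod μ₂)) (hone : (one : Ω₁ × Ω₂ → ℂ) =ᵐ[μ₁.prod μ₂] fun _ => 1) :
    @inner ℂ _ _ one
        ((M 0 * (List.ofFn fun i : Fin n => T i * M i.succ).prod) one)
      = (∏ i : Fin (n + 1), ∫ x, g i x ∂μ₂) * ∫ x, ∏ i : Fin n, f i x ∂μ₁ :=
  monotone_independence_moment_factorization_general μ₁ μ₂ n f g T M hT hM one hone
end

section
/- Let (Ω₁, μ₁) and (Ω₂, μ₂) be probability spaces and H = L²(μ₁ ⊗ μ₂; ℂ). For all essentially bounded measurable f : Ω₁ → ℝ and g : Ω₂ → ℝ one has φ(M g ∘ T f ∘ M g) = (∫ g dμ₂)² · ∫ f dμ₁. Consequently, if ∫ g² dμ₂ ≠ (∫ g dμ₂)² (i.e. g is not μ₂-a.e. constant) and ∫ f dμ₁ ≠ 0, then φ(M g ∘ T f ∘ M g) ≠ (∫ g² dμ₂) · ∫ f dμ₁; hence the pair of algebras in the reversed order ({M g}, {T f}) fails the monotone independence factorization: monotone independence is not symmetric. -/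
/-!
`M g 𝟙` is `1 ⊗ g`, whose fibre integrals are all `∫ g`, so `T f (M g 𝟙) = (∫ g) · f ⊗ 1` and
`M g (T f (M g 𝟙)) = (∫ g) · f ⊗ g`. Pairing with `𝟙` and applying Fubini gives `(∫ g)² ∫ f`,
whereas the monotone factorization for the pair `({M g}, {T f})` would demand `(∫ g²) ∫ f`.
-/

open MeasureTheory

section

variable {α β : Type*} [MeasurableSpace α] [MeasurableSpace β] {μ : Measure α} {ν : Measure β}

theorem MeasureTheory.L2.inner_eq_integral_of_ae_eq_one {𝕜 : Type*} [RCLike 𝕜]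
    {one u : Lp 𝕜 2 μ} (hone : (one : α → 𝕜) =ᵐ[μ] fun _ => 1) :
    @inner 𝕜 _ _ one u = ∫ a, u a ∂μ := by
  rw [L2.inner_def]
  refine integral_congr_ae ?_
  filter_upwards [hone] with a ha
  simp [ha]

theorem ae_integral_slice_eq_of_ae_eq_comp_snd [SFinite ν]
    {E : Type*} [NormedAddCommGroup E] [NormedSpace ℝ E] {F : α × β → E} {G : β → E}
    (h : F =ᵐ[μ.prod ν] fun p => G p.2) :
    ∀ᵐ p ∂μ.prod ν, ∫ y, F (p.1, y) ∂ν = ∫ y, G y ∂ν := by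
  refine Measure.quasiMeasurePreserving_fst.ae (p := fun x => ∫ y, F (x, y) ∂ν = ∫ y, G y ∂ν) ?_
  filter_upwards [Measure.ae_ae_of_ae_prod h] with x hx
  exact integral_congr_ae hx

end

section

variable {Ω₁ Ω₂ : Type*} [MeasurableSpace Ω₁] [MeasurableSpace Ω₂] {μ₁ : Measure Ω₁}
  {μ₂ : Measure Ω₂}

/-- `T` is the operator `f ⊗ |1⟩⟨1|` on `L²(μ₁ ⊗ μ₂)`. -/
def IsTensorRankOne (μ₁ : Measure Ω₁) (μ₂ : Measure Ω₂) (f : Ω₁ → ℂ)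
    (T : Lp ℂ 2 (μ₁.prod μ₂) →L[ℂ] Lp ℂ 2 (μ₁.prod μ₂)) : Prop :=
  ∀ h : Lp ℂ 2 (μ₁.prod μ₂), (T h : Ω₁ × Ω₂ → ℂ) =ᵐ[μ₁.prod μ₂]
    fun p => f p.1 * ∫ y, (h : Ω₁ × Ω₂ → ℂ) (p.1, y) ∂μ₂

/-- `M` is the operator `id ⊗ g` on `L²(μ₁ ⊗ μ₂)`. -/
def IsIdTensorMul (μ₁ : Measure Ω₁) (μ₂ : Measure Ω₂) (g : Ω₂ → ℂ)
    (M : Lp ℂ 2 (μ₁.prod μ₂) →L[ℂ] Lp ℂ 2 (μ₁.prod μ₂)) : Prop :=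
  ∀ h : Lp ℂ 2 (μ₁.prod μ₂), (M h : Ω₁ × Ω₂ → ℂ) =ᵐ[μ₁.prod μ₂]
    fun p => g p.2 * (h : Ω₁ × Ω₂ → ℂ) p

variable {f : Ω₁ → ℂ} {g G : Ω₂ → ℂ} {T M : Lp ℂ 2 (μ₁.prod μ₂) →L[ℂ] Lp ℂ 2 (μ₁.prod μ₂)}
  {one h : Lp ℂ 2 (μ₁.prod μ₂)}

theorem IsTensorRankOne.apply_ae_eq_of_ae_eq_comp_snd [SFinite μ₂]
    (hT : IsTensorRankOne μ₁ μ₂ f T) (hh : (h : Ω₁ × Ω₂ → ℂ) =ᵐ[μ₁.prod μ₂] fun p => G p.2) :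
    (T h : Ω₁ × Ω₂ → ℂ) =ᵐ[μ₁.prod μ₂] fun p => f p.1 * ∫ y, G y ∂μ₂ := by
  filter_upwards [hT h, ae_integral_slice_eq_of_ae_eq_comp_snd hh] with p hTp hp
  rw [hTp, hp]

theorem IsIdTensorMul.apply_ae_eq_of_ae_eq_one (hM : IsIdTensorMul μ₁ μ₂ g M)
    (hone : (one : Ω₁ × Ω₂ → ℂ) =ᵐ[μ₁.prod μ₂] fun _ => 1) :
    (M one : Ω₁ × Ω₂ → ℂ) =ᵐ[μ₁.prod μ₂] fun p => g p.2 := by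
  filter_upwards [hM one, hone] with p hMp hp
  rw [hMp, hp, mul_one]

theorem IsTensorRankOne.mul_mul_apply_ae_eq [SFinite μ₂]
    (hT : IsTensorRankOne μ₁ μ₂ f T) (hM : IsIdTensorMul μ₁ μ₂ g M)
    (hone : (one : Ω₁ × Ω₂ → ℂ) =ᵐ[μ₁.prod μ₂] fun _ => 1) :
    ((M * T * M) one : Ω₁ × Ω₂ → ℂ) =ᵐ[μ₁.prod μ₂]
      fun p => f p.1 * g p.2 * ∫ y, g y ∂μ₂ := by
  filter_upwards [hM (T (M one)),
    hT.apply_ae_eq_of_ae_eq_comp_snd (hM.apply_ae_eq_of_ae_eq_one hone)] with p hMp hTp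
  rw [mul_apply_eq_comp, mul_apply_eq_comp, hMp, hTp]
  ring

theorem IsTensorRankOne.inner_mul_mul_apply_eq [SFinite μ₁] [SFinite μ₂]
    (hT : IsTensorRankOne μ₁ μ₂ f T) (hM : IsIdTensorMul μ₁ μ₂ g M)
    (hone : (one : Ω₁ × Ω₂ → ℂ) =ᵐ[μ₁.prod μ₂] fun _ => 1) :
    @inner ℂ _ _ one ((M * T * M) one) = (∫ y, g y ∂μ₂) ^ 2 * ∫ x, f x ∂μ₁ :=
  calc @inner ℂ _ _ one ((M * T * M) one)
      = ∫ p, f p.1 * g p.2 * ∫ y, g y ∂μ₂ ∂μ₁.prod μ₂ :=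
        (L2.inner_eq_integral_of_ae_eq_one hone).trans
          (integral_congr_ae (hT.mul_mul_apply_ae_eq hM hone))
    _ = (∫ y, g y ∂μ₂) ^ 2 * ∫ x, f x ∂μ₁ := by
        rw [integral_mul_const, integral_prod_mul]
        ring

end

theorem monotone_independence_not_symmetric_general
    {Ω₁ Ω₂ : Type*} [MeasurableSpace Ω₁] [MeasurableSpace Ω₂]
    (μ₁ : Measure Ω₁) (μ₂ : Measure Ω₂) [IsProbabilityMeasure μ₁] [IsProbabilityMeasure μ₂]
    (f : Ω₁ → ℝ) (g : Ω₂ → ℝ)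
    (Tf Mg : Lp ℂ 2 (μ₁.prod μ₂) →L[ℂ] Lp ℂ 2 (μ₁.prod μ₂))
    (hTf : ∀ h : Lp ℂ 2 (μ₁.prod μ₂), (Tf h : Ω₁ × Ω₂ → ℂ) =ᵐ[μ₁.prod μ₂]
      fun p => (f p.1 : ℂ) * ∫ y, (h : Ω₁ × Ω₂ → ℂ) (p.1, y) ∂μ₂)
    (hMg : ∀ h : Lp ℂ 2 (μ₁.prod μ₂), (Mg h : Ω₁ × Ω₂ → ℂ) =ᵐ[μ₁.prod μ₂]
      fun p => (g p.2 : ℂ) * (h : Ω₁ × Ω₂ → ℂ) p)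
    (one : Lp ℂ 2 (μ₁.prod μ₂)) (hone : (one : Ω₁ × Ω₂ → ℂ) =ᵐ[μ₁.prod μ₂] fun _ => 1) :
    @inner ℂ _ _ one ((Mg * Tf * Mg) one)
        = ((∫ y, g y ∂μ₂ : ℝ) : ℂ) ^ 2 * ((∫ x, f x ∂μ₁ : ℝ) : ℂ) ∧
      ((∫ y, (g y) ^ 2 ∂μ₂ ≠ (∫ y, g y ∂μ₂) ^ 2) → (∫ x, f x ∂μ₁ ≠ 0) →
        @inner ℂ _ _ one ((Mg * Tf * Mg) one)
          ≠ ((∫ y, (g y) ^ 2 ∂μ₂ : ℝ) : ℂ) * ((∫ x, f x ∂μ₁ : ℝ) : ℂ)) := by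
  have hstate : @inner ℂ _ _ one ((Mg * Tf * Mg) one)
      = ((∫ y, g y ∂μ₂ : ℝ) : ℂ) ^ 2 * ((∫ x, f x ∂μ₁ : ℝ) : ℂ) := by
    rw [IsTensorRankOne.inner_mul_mul_apply_eq (f := fun x => (f x : ℂ))
      (g := fun y => (g y : ℂ)) hTf hMg hone, integral_complex_ofReal, integral_complex_ofReal]
  refine ⟨hstate, fun hg hf heq => hg ?_⟩
  rw [hstate] at heq
  exact_mod_cast (mul_right_cancel₀ (Complex.ofReal_ne_zero.mpr hf) heq).symm

/-- **Monotone independence is not symmetric.** On `H = L²(μ₁ ⊗ μ₂; ℂ)`, for real essentially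
bounded measurable `f : Ω₁ → ℝ` and `g : Ω₂ → ℝ` and the operators `T f = f ⊗ |1⟩⟨1|`,
`M g = id ⊗ g`, the vector state `φ(S) = ⟪𝟙, S 𝟙⟫` satisfies
`φ(M g ∘ T f ∘ M g) = (∫ g dμ₂)² · ∫ f dμ₁`.  Hence if `∫ g² dμ₂ ≠ (∫ g dμ₂)²` and
`∫ f dμ₁ ≠ 0`, then `φ(M g ∘ T f ∘ M g) ≠ (∫ g² dμ₂) · ∫ f dμ₁`: the reversed pair
`({M g}, {T f})` fails the monotone independence factorization. -/
theorem monotone_independence_not_symmetric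
    {Ω₁ Ω₂ : Type*} [MeasurableSpace Ω₁] [MeasurableSpace Ω₂]
    (μ₁ : Measure Ω₁) (μ₂ : Measure Ω₂) [IsProbabilityMeasure μ₁] [IsProbabilityMeasure μ₂]
    (f : Ω₁ → ℝ) (g : Ω₂ → ℝ)
    (hfm : Measurable f) (hfb : MemLp f ⊤ μ₁)
    (hgm : Measurable g) (hgb : MemLp g ⊤ μ₂)
    (Tf Mg : Lp ℂ 2 (μ₁.prod μ₂) →L[ℂ] Lp ℂ 2 (μ₁.prod μ₂))
    (hTf : ∀ h : Lp ℂ 2 (μ₁.prod μ₂), (Tf h : Ω₁ × Ω₂ → ℂ) =ᵐ[μ₁.prod μ₂]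
      fun p => (f p.1 : ℂ) * ∫ y, (h : Ω₁ × Ω₂ → ℂ) (p.1, y) ∂μ₂)
    (hMg : ∀ h : Lp ℂ 2 (μ₁.prod μ₂), (Mg h : Ω₁ × Ω₂ → ℂ) =ᵐ[μ₁.prod μ₂]
      fun p => (g p.2 : ℂ) * (h : Ω₁ × Ω₂ → ℂ) p)
    (one : Lp ℂ 2 (μ₁.prod μ₂)) (hone : (one : Ω₁ × Ω₂ → ℂ) =ᵐ[μ₁.prod μ₂] fun _ => 1) :
    @inner ℂ _ _ one ((Mg * Tf * Mg) one)
        = ((∫ y, g y ∂μ₂ : ℝ) : ℂ) ^ 2 * ((∫ x, f x ∂μ₁ : ℝ) : ℂ) ∧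
      ((∫ y, (g y) ^ 2 ∂μ₂ ≠ (∫ y, g y ∂μ₂) ^ 2) → (∫ x, f x ∂μ₁ ≠ 0) →
        @inner ℂ _ _ one ((Mg * Tf * Mg) one)
          ≠ ((∫ y, (g y) ^ 2 ∂μ₂ : ℝ) : ℂ) * ((∫ x, f x ∂μ₁ : ℝ) : ℂ)) :=
  monotone_independence_not_symmetric_general μ₁ μ₂ f g Tf Mg hTf hMg one hone
end

section
/- (Construction of conditionally independent random variables from two marginal kernels.) Let ν be a probability measure on a standard Borel space E₀, and let κ₁ : Kernel E₀ E₁ and κ₂ : Kernel E₀ E₂ be Markov kernels into standard Borel spaces E₁, E₂. Let μ = ν ⊗ₘ (κ₁ ×ₖ κ₂) be the probability measure on E₀ × (E₁ × E₂) obtained by composing ν with the pointwise product kernel y ↦ κ₁(y) ⊗ κ₂(y). Let Y(ω) = ω.1, X₁(ω) = ω.2.1, X₂(ω) = ω.2.2 be the coordinate maps. Then X₁ and X₂ are conditionally independent given the σ-algebra generated by Y, i.e. μ[(f∘X₁)·(g∘X₂) | σ(Y)] = μ[f∘X₁ | σ(Y)] · μ[g∘X₂ | σ(Y)] μ-a.e.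 for all bounded measurable f, g (equivalently, CondIndepFun X₁ X₂ holds given comap Y under μ). Moreover the first marginal of μ is ν and the joint distribution of (Y, Xᵢ) is ν ⊗ₘ κᵢ. -/
open MeasureTheory ProbabilityTheory

lemma map_compProd_snd_comp {E₀ F G : Type*} [MeasurableSpace E₀] [MeasurableSpace F]
    [MeasurableSpace G] (ν : Measure E₀) [SFinite ν] (η : Kernel E₀ F) [IsSFiniteKernel η]
    {φ : F → G} (hφ : Measurable φ) :
    (ν ⊗ₘ η).map (fun ω => (ω.1, φ ω.2)) = ν ⊗ₘ (η.map φ) := by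
  ext s hs
  have hm : Measurable fun ω : E₀ × F => (ω.1, φ ω.2) := measurable_fst.prodMk (hφ.comp measurable_snd)
  rw [Measure.map_apply hm hs, Measure.compProd_apply hs, Measure.compProd_apply (hm hs)]
  refine lintegral_congr fun y => ?_
  rw [Kernel.map_apply' _ hφ _ (measurable_prodMk_left hs)]
  rfl

lemma condexp_snd_preimage {E₀ F : Type*} [MeasurableSpace E₀] [MeasurableSpace F]
    [StandardBorelSpace E₀] [StandardBorelSpace F] [Nonempty E₀] [Nonempty F]
    (ν : Measure E₀) [IsProbabilityMeasure ν] (η : Kernel E₀ F) [IsMarkovKernel η]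
    {A : Set F} (hA : MeasurableSet A) :
    (ν ⊗ₘ η)⟦Prod.snd ⁻¹' A | MeasurableSpace.comap Prod.fst inferInstance⟧
      =ᵐ[ν ⊗ₘ η] fun ω => (η ω.1 A).toReal := by
  set μ := ν ⊗ₘ η with hμ
  have hmap : μ.map Prod.fst = ν := Measure.fst_compProd ν η
  have h1 : (fun a => (condDistrib Prod.snd Prod.fst μ (Prod.fst a) A).toReal)
      =ᵐ[μ] μ⟦Prod.snd ⁻¹' A | MeasurableSpace.comap Prod.fst inferInstance⟧ :=
    by have := condDistrib_ae_eq_condExp (μ := μ) measurable_fst measurable_snd hA; exact this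
  have h2 : ∀ᵐ x ∂(μ.map Prod.fst), η x = condDistrib Prod.snd Prod.fst μ x := by
    refine (condDistrib_ae_eq_of_measure_eq_compProd_of_measurable (κ := η) measurable_fst measurable_snd ?_).mono fun x hx => hx.symm
    have : (fun x : E₀ × F => (x.1, x.2)) = id := rfl
    rw [this, Measure.map_id, hmap]
  have h3 : ∀ᵐ ω ∂μ, η ω.1 = condDistrib Prod.snd Prod.fst μ ω.1 :=
    ae_of_ae_map measurable_fst.aemeasurable h2
  filter_upwards [h1, h3] with ω h1 h3
  rw [← h1, h3]

/-- **Construction of conditionally independent random variables from two marginal kernels.**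
Given a probability measure `ν` on `E₀` and Markov kernels `κ₁ : Kernel E₀ E₁`,
`κ₂ : Kernel E₀ E₂`, the measure `μ = ν ⊗ₘ (κ₁ ×ₖ κ₂)` on `E₀ × (E₁ × E₂)` makes the
coordinates `X₁, X₂` conditionally independent given the σ-algebra generated by the
coordinate `Y`; moreover the distribution of `Y` is `ν` and the joint distribution of
`(Y, Xᵢ)` is `ν ⊗ₘ κᵢ`. -/
theorem condIndep_of_compProd_prodKernel
    {E₀ E₁ E₂ : Type*} [MeasurableSpace E₀] [MeasurableSpace E₁] [MeasurableSpace E₂]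
    [StandardBorelSpace E₀] [StandardBorelSpace E₁] [StandardBorelSpace E₂]
    [Nonempty E₀] [Nonempty E₁] [Nonempty E₂]
    (ν : Measure E₀) [IsProbabilityMeasure ν]
    (κ₁ : Kernel E₀ E₁) (κ₂ : Kernel E₀ E₂) [IsMarkovKernel κ₁] [IsMarkovKernel κ₂]
    (μ : Measure (E₀ × E₁ × E₂)) (hμ : μ = ν ⊗ₘ (κ₁ ×ₖ κ₂)) [IsProbabilityMeasure μ]
    (Y : E₀ × E₁ × E₂ → E₀) (X₁ : E₀ × E₁ × E₂ → E₁) (X₂ : E₀ × E₁ × E₂ → E₂)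
    (hY : Y = fun ω => ω.1) (hX₁ : X₁ = fun ω => ω.2.1) (hX₂ : X₂ = fun ω => ω.2.2) :
    CondIndepFun (MeasurableSpace.comap Y inferInstance)
        (by rw [hY]; exact measurable_fst.comap_le) X₁ X₂ μ ∧
      μ.map Y = ν ∧
      μ.map (fun ω => (Y ω, X₁ ω)) = ν ⊗ₘ κ₁ ∧
      μ.map (fun ω => (Y ω, X₂ ω)) = ν ⊗ₘ κ₂ := by
  subst hY hX₁ hX₂
  have hmap : μ.map (fun ω : E₀ × E₁ × E₂ => ω.1) = ν := by
    rw [hμ]; exact Measure.fst_compProd ν (κ₁ ×ₖ κ₂)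
  have hcond : ∀ {A : Set (E₁ × E₂)}, MeasurableSet A →
      μ⟦(fun ω : E₀ × E₁ × E₂ => ω.2) ⁻¹' A |
          MeasurableSpace.comap (fun ω : E₀ × E₁ × E₂ => ω.1) inferInstance⟧
        =ᵐ[μ] fun ω => ((κ₁ ×ₖ κ₂) ω.1 A).toReal := by
    intro A hA
    rw [hμ]
    exact condexp_snd_preimage ν (κ₁ ×ₖ κ₂) hA
  refine ⟨?_, hmap, ?_, ?_⟩
  · rw [condIndepFun_iff_condExp_inter_preimage_eq_mul measurable_snd.fst measurable_snd.snd]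
    intro s t hs ht
    have h12 : (fun ω : E₀ × E₁ × E₂ => ω.2.1) ⁻¹' s ∩ (fun ω : E₀ × E₁ × E₂ => ω.2.2) ⁻¹' t
        = (fun ω : E₀ × E₁ × E₂ => ω.2) ⁻¹' (s ×ˢ t) := rfl
    have h1 : (fun ω : E₀ × E₁ × E₂ => ω.2.1) ⁻¹' s
        = (fun ω : E₀ × E₁ × E₂ => ω.2) ⁻¹' (s ×ˢ Set.univ) := by
      ext ω; simp
    have h2 : (fun ω : E₀ × E₁ × E₂ => ω.2.2) ⁻¹' t
        = (fun ω : E₀ × E₁ × E₂ => ω.2) ⁻¹' (Set.univ ×ˢ t) := by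
      ext ω; simp
    rw [h12, h1, h2]
    filter_upwards [hcond (hs.prod ht), hcond (hs.prod MeasurableSet.univ),
      hcond (MeasurableSet.univ.prod ht)] with ω e12 e1 e2
    rw [e12, e1, e2]
    simp only [Kernel.prod_apply, Measure.prod_prod, measure_univ, mul_one, one_mul]
    rw [ENNReal.toReal_mul]
  · rw [hμ]
    have : (fun ω : E₀ × E₁ × E₂ => (ω.1, ω.2.1))
        = fun ω : E₀ × E₁ × E₂ => (ω.1, Prod.fst ω.2) := rfl
    rw [this, map_compProd_snd_comp ν (κ₁ ×ₖ κ₂) measurable_fst]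
    rw [← Kernel.fst_eq, Kernel.fst_prod]
  · rw [hμ]
    have : (fun ω : E₀ × E₁ × E₂ => (ω.1, ω.2.2))
        = fun ω : E₀ × E₁ × E₂ => (ω.1, Prod.snd ω.2) := rfl
    rw [this, map_compProd_snd_comp ν (κ₁ ×ₖ κ₂) measurable_snd]
    rw [← Kernel.snd_eq, Kernel.snd_prod]
end

section
/- (Markov property of a two-step chain.) Let ν be a probability measure on a standard Borel space E₀, and let κ₁ : Kernel E₀ E₁ and κ₂ : Kernel E₁ E₂ be Markov kernels between standard Borel spaces. Let μ be the probability measure on (E₀ × E₁) × E₂ given by μ = (ν ⊗ₘ κ₁) ⊗ₘ (κ₂ ∘ snd), i.e. the composition product of ν ⊗ₘ κ₁ with the kernel (y₀, y₁) ↦ κ₂(y₁). Let X₀(ω) = ω.1.1, X₁(ω) = ω.1.2, X₂(ω) = ω.2. Then X₀ and X₂ are conditionally independent given the σ-algebra generated by X₁ (the past and the future of a Markov chain are conditionally independent over the present). -/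
open MeasureTheory ProbabilityTheory

private abbrev mPast (E₀ E₁ E₂ : Type*) [MeasurableSpace E₁] :
    MeasurableSpace ((E₀ × E₁) × E₂) :=
  MeasurableSpace.comap (fun ω => ω.1.2) inferInstance


/-- **Markov property of a two-step chain.** For a probability measure `ν` on `E₀` and Markov
kernels `κ₁ : Kernel E₀ E₁`, `κ₂ : Kernel E₁ E₂`, consider the law
`μ = (ν ⊗ₘ κ₁) ⊗ₘ (κ₂ ∘ snd)` of the two-step Markov chain `(X₀, X₁, X₂)`.  Then the past `X₀`
and the future `X₂` are conditionally independent given the present `X₁`. -/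
theorem markov_two_step_condIndep
    {E₀ E₁ E₂ : Type*} [MeasurableSpace E₀] [MeasurableSpace E₁] [MeasurableSpace E₂]
    [StandardBorelSpace E₀] [StandardBorelSpace E₁] [StandardBorelSpace E₂]
    [Nonempty E₀] [Nonempty E₁] [Nonempty E₂]
    (ν : Measure E₀) [IsProbabilityMeasure ν]
    (κ₁ : Kernel E₀ E₁) (κ₂ : Kernel E₁ E₂) [IsMarkovKernel κ₁] [IsMarkovKernel κ₂]
    (μ : Measure ((E₀ × E₁) × E₂))
    (hμ : μ = (ν ⊗ₘ κ₁) ⊗ₘ (Kernel.prodMkLeft E₀ κ₂)) [IsProbabilityMeasure μ]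
    (X₀ : (E₀ × E₁) × E₂ → E₀) (X₁ : (E₀ × E₁) × E₂ → E₁) (X₂ : (E₀ × E₁) × E₂ → E₂)
    (hX₀ : X₀ = fun ω => ω.1.1) (hX₁ : X₁ = fun ω => ω.1.2) (hX₂ : X₂ = fun ω => ω.2) :
    CondIndepFun (MeasurableSpace.comap X₁ inferInstance)
        (by rw [hX₁]; exact (measurable_snd.comp measurable_fst).comap_le) X₀ X₂ μ := by
  subst hX₀ hX₁ hX₂
  have hm' : mPast E₀ E₁ E₂ ≤ (inferInstance : MeasurableSpace ((E₀ × E₁) × E₂)) :=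
    (measurable_snd.comp measurable_fst).comap_le
  have hX₁m' : Measurable[mPast E₀ E₁ E₂] (fun ω : (E₀ × E₁) × E₂ => ω.1.2) :=
    Measurable.of_comap_le le_rfl
  -- core integral computation
  have hC : ∀ (V : Set (E₀ × E₁)), MeasurableSet V → ∀ (t : Set E₂), MeasurableSet t →
      ∫ ω in Prod.fst ⁻¹' V, (κ₂ ω.1.2 t).toReal ∂μ
        = (μ (Prod.fst ⁻¹' V ∩ Prod.snd ⁻¹' t)).toReal := by
    intro V hV t ht
    have hfst : μ.fst = ν ⊗ₘ κ₁ := by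
      rw [hμ]; exact Measure.fst_compProd _ _
    have hmeasf : Measurable fun p : E₀ × E₁ => (κ₂ p.2 t).toReal :=
      ((κ₂.measurable_coe ht).comp measurable_snd).ennreal_toReal
    have hL : ∫ ω in Prod.fst ⁻¹' V, (κ₂ ω.1.2 t).toReal ∂μ
        = ∫ p in V, (κ₂ p.2 t).toReal ∂(ν ⊗ₘ κ₁) := by
      rw [← hfst, Measure.fst,
        setIntegral_map hV hmeasf.aestronglyMeasurable measurable_fst.aemeasurable]
    have hR : μ (Prod.fst ⁻¹' V ∩ Prod.snd ⁻¹' t) = ∫⁻ p in V, κ₂ p.2 t ∂(ν ⊗ₘ κ₁) := by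
      rw [← Set.prod_eq, hμ, Measure.compProd_apply_prod hV ht]
      rfl
    rw [hL, hR, integral_toReal]
    · exact ((κ₂.measurable_coe ht).comp measurable_snd).aemeasurable
    · exact Filter.Eventually.of_forall fun p => measure_lt_top _ _
  rw [condIndepFun_iff_condExp_inter_preimage_eq_mul
    (f := fun ω : (E₀ × E₁) × E₂ => ω.1.1) (g := fun ω : (E₀ × E₁) × E₂ => ω.2)
    measurable_fst.fst measurable_snd]
  intro s t hs ht
  set h : (E₀ × E₁) × E₂ → ℝ := fun ω => (κ₂ ω.1.2 t).toReal with hhdef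
  have hh_sm : StronglyMeasurable[mPast E₀ E₁ E₂] h :=
    (((κ₂.measurable_coe ht).comp hX₁m').ennreal_toReal).stronglyMeasurable
  have hh_meas : Measurable h :=
    ((κ₂.measurable_coe ht).comp (measurable_snd.comp measurable_fst)).ennreal_toReal
  have hh_bdd : ∀ ω, ‖h ω‖ ≤ 1 := by
    intro ω
    rw [Real.norm_eq_abs, abs_of_nonneg ENNReal.toReal_nonneg]
    exact ENNReal.toReal_le_of_le_ofReal zero_le_one (by simpa using prob_le_one)
  have hh_int : Integrable h μ :=
    ⟨hh_meas.aestronglyMeasurable,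
      HasFiniteIntegral.of_bounded (C := 1) (Filter.Eventually.of_forall hh_bdd)⟩
  have hind_int : ∀ (u : Set ((E₀ × E₁) × E₂)), MeasurableSet u →
      Integrable (u.indicator (fun _ => (1:ℝ))) μ :=
    fun u hu => (integrable_const 1).indicator hu
  have ht2 : MeasurableSet ((fun ω : (E₀ × E₁) × E₂ => ω.2) ⁻¹' t) := measurable_snd ht
  have ht1 : MeasurableSet ((fun ω : (E₀ × E₁) × E₂ => ω.1.1) ⁻¹' s) :=
    measurable_fst.fst hs
  have hm'rep : ∀ (u : Set ((E₀ × E₁) × E₂)), MeasurableSet[mPast E₀ E₁ E₂] u →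
      ∃ V : Set (E₀ × E₁), MeasurableSet V ∧ u = Prod.fst ⁻¹' V := by
    rintro u ⟨S, hS, rfl⟩
    exact ⟨Prod.snd ⁻¹' S, measurable_snd hS, rfl⟩
  -- Claim A : condexp of X₂ ∈ t given m' is h
  have hA : h =ᵐ[μ] (μ⟦(fun ω : (E₀ × E₁) × E₂ => ω.2) ⁻¹' t | mPast E₀ E₁ E₂⟧) := by
    refine ae_eq_condExp_of_forall_setIntegral_eq hm' (hind_int _ ht2)
      (fun u _ _ => hh_int.integrableOn) (fun u hu _ => ?_) hh_sm.aestronglyMeasurable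
    obtain ⟨V, hV, rfl⟩ := hm'rep u hu
    rw [hC V hV t ht, setIntegral_indicator ht2, setIntegral_const, smul_eq_mul, mul_one,
      Set.inter_comm, measureReal_def]
  -- Claim B : condexp of the intersection
  have hB : (fun ω =>
        (μ⟦(fun ω : (E₀ × E₁) × E₂ => ω.1.1) ⁻¹' s | mPast E₀ E₁ E₂⟧) ω * h ω) =ᵐ[μ]
      (μ⟦((fun ω : (E₀ × E₁) × E₂ => ω.1.1) ⁻¹' s ∩ (fun ω : (E₀ × E₁) × E₂ => ω.2) ⁻¹' t)
        | mPast E₀ E₁ E₂⟧) := by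
    have hint_mul : Integrable (fun ω => h ω *
        ((fun ω : (E₀ × E₁) × E₂ => ω.1.1) ⁻¹' s).indicator (fun _ => (1:ℝ)) ω) μ :=
      (hind_int _ ht1).bdd_mul hh_meas.aestronglyMeasurable (Filter.Eventually.of_forall hh_bdd)
    have hmul : μ[(fun ω => h ω *
          ((fun ω : (E₀ × E₁) × E₂ => ω.1.1) ⁻¹' s).indicator (fun _ => (1:ℝ)) ω)
            | mPast E₀ E₁ E₂]
        =ᵐ[μ] fun ω => h ω *
          (μ⟦(fun ω : (E₀ × E₁) × E₂ => ω.1.1) ⁻¹' s | mPast E₀ E₁ E₂⟧) ω :=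
      condExp_mul_of_stronglyMeasurable_left hh_sm hint_mul (hind_int _ ht1)
    refine ae_eq_condExp_of_forall_setIntegral_eq hm' (hind_int _ (ht1.inter ht2))
      (fun u _ _ => (integrable_condExp.bdd_mul hh_meas.aestronglyMeasurable
        (Filter.Eventually.of_forall hh_bdd)).integrableOn.congr
        (Filter.Eventually.of_forall fun ω => mul_comm _ _)) (fun u hu _ => ?_)
      ((stronglyMeasurable_condExp.mul hh_sm).aestronglyMeasurable)
    obtain ⟨V, hV, rfl⟩ := hm'rep u hu
    calc ∫ ω in Prod.fst ⁻¹' V,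
          (μ⟦(fun ω : (E₀ × E₁) × E₂ => ω.1.1) ⁻¹' s | mPast E₀ E₁ E₂⟧) ω * h ω ∂μ
        = ∫ ω in Prod.fst ⁻¹' V, (μ[(fun ω => h ω *
            ((fun ω : (E₀ × E₁) × E₂ => ω.1.1) ⁻¹' s).indicator (fun _ => (1:ℝ)) ω)
              | mPast E₀ E₁ E₂]) ω ∂μ := by
          refine setIntegral_congr_ae (hm' _ hu) ?_
          filter_upwards [hmul] with ω hω _
          rw [hω, mul_comm]
      _ = ∫ ω in Prod.fst ⁻¹' V, h ω *
            ((fun ω : (E₀ × E₁) × E₂ => ω.1.1) ⁻¹' s).indicator (fun _ => (1:ℝ)) ω ∂μ :=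
          setIntegral_condExp hm' hint_mul hu
      _ = ∫ ω in Prod.fst ⁻¹' V,
            ((fun ω : (E₀ × E₁) × E₂ => ω.1.1) ⁻¹' s).indicator h ω ∂μ := by
          refine setIntegral_congr_ae (hm' _ hu) ?_
          refine Filter.Eventually.of_forall fun ω _ => ?_
          by_cases hω : ω ∈ (fun ω : (E₀ × E₁) × E₂ => ω.1.1) ⁻¹' s <;>
            simp [hω]
      _ = ∫ ω in Prod.fst ⁻¹' (Prod.fst ⁻¹' s ∩ V), (κ₂ ω.1.2 t).toReal ∂μ := by
          rw [setIntegral_indicator ht1,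
            show (Prod.fst ⁻¹' V ∩ (fun ω : (E₀ × E₁) × E₂ => ω.1.1) ⁻¹' s)
                = Prod.fst ⁻¹' (Prod.fst ⁻¹' s ∩ V) from by
              ext ω; simp only [Set.mem_inter_iff, Set.mem_preimage]; tauto]
      _ = (μ (Prod.fst ⁻¹' (Prod.fst ⁻¹' s ∩ V) ∩ Prod.snd ⁻¹' t)).toReal :=
          hC _ ((measurable_fst hs).inter hV) t ht
      _ = ∫ ω in Prod.fst ⁻¹' V,
            (((fun ω : (E₀ × E₁) × E₂ => ω.1.1) ⁻¹' s ∩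
              (fun ω : (E₀ × E₁) × E₂ => ω.2) ⁻¹' t)).indicator (fun _ => (1:ℝ)) ω ∂μ := by
          rw [setIntegral_indicator (ht1.inter ht2), setIntegral_const, smul_eq_mul, mul_one, measureReal_def]
          congr 2
          ext ω
          simp only [Set.mem_inter_iff, Set.mem_preimage]
          tauto
  refine hB.symm.trans ?_
  filter_upwards [hA] with ω hω
  rw [← hω]
end

section
/- (Quantum monotone independence of full matrix algebras.) Let ξ : Fin n → ℂ and η : Fin m → ℂ be unit vectors, set E = Matrix.vecMulVec η (star η) ∈ Matrix (Fin m) (Fin m) ℂ and let ζ : Fin n × Fin m → ℂ, ζ(i,j) = ξ i · η j, be the product unit vector. For every k ≥ 1 and all matrices A₁, …, A_k ∈ Matrix (Fin n) (Fin n) ℂ and B₀, B₁, …, B_k ∈ Matrix (Fin m) (Fin m) ℂ, the vector state of the alternating word satisfies star ζ ⬝ᵥ ((1 ⊗ₖ B₀) * (A₁ ⊗ₖ E) * (1 ⊗ₖ B₁) * ⋯ * (A_k ⊗ₖ E) * (1 ⊗ₖ B_k)) *ᵥ ζ = (∏_{i=0}^{k} (star η ⬝ᵥ (Bᵢ *ᵥ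 η))) · (star ξ ⬝ᵥ ((A₁ * ⋯ * A_k) *ᵥ ξ)). Hence the ordered pair of algebras ({A ⊗ₖ E : A}, {1 ⊗ₖ B : B}) is monotone independent in the vector state given by ζ. -/
/-!
The word factors as a single Kronecker product
`(A₁ ⋯ A_k) ⊗ₖ (B₀ E B₁ E ⋯ E B_k)`, and a product vector state is multiplicative on
Kronecker products. In the second factor each `E = |η⟩⟨η|` splits the word, since
`⟨η, X E Y η⟩ = ⟨η, X η⟩ ⟨η, Y η⟩`.
-/

open Matrix Kronecker

namespace Matrix

variable {R : Type*} [CommSemiring R] {l m n p : Type*}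

theorem list_prod_ofFn_kronecker [Fintype m] [DecidableEq m] [Fintype n] [DecidableEq n]
    {k : ℕ} (A : Fin k → Matrix m m R) (C : Fin k → Matrix n n R) :
    (List.ofFn fun i => A i ⊗ₖ C i).prod = (List.ofFn A).prod ⊗ₖ (List.ofFn C).prod := by
  induction k with
  | zero => simp
  | succ k ih =>
    simp only [List.ofFn_succ, List.prod_cons]
    rw [ih, mul_kronecker_mul]

theorem kronecker_mulVec_mul [Fintype m] [Fintype p] (X : Matrix l m R) (Y : Matrix n p R)
    (u : m → R) (v : p → R) :
    (X ⊗ₖ Y) *ᵥ (fun q : m × p => u q.1 * v q.2) = fun q => (X *ᵥ u) q.1 * (Y *ᵥ v) q.2 := by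
  ext q
  simp only [mulVec, dotProduct, kroneckerMap_apply, Fintype.sum_prod_type, Finset.sum_mul_sum]
  exact Finset.sum_congr rfl fun i _ => Finset.sum_congr rfl fun j _ => by ring

theorem star_mul_dotProduct_mul [StarRing R] [Fintype m] [Fintype n] (a c : m → R)
    (b d : n → R) :
    star (fun q : m × n => a q.1 * b q.2) ⬝ᵥ (fun q => c q.1 * d q.2)
      = (star a ⬝ᵥ c) * (star b ⬝ᵥ d) := by
  simp only [dotProduct, Pi.star_apply, star_mul', Fintype.sum_prod_type, Finset.sum_mul_sum]
  exact Finset.sum_congr rfl fun i _ => Finset.sum_congr rfl fun j _ => by ring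

theorem dotProduct_mul_vecMulVec_mul_mulVec [Fintype m] [Fintype n] (w : n → R)
    (X Y : Matrix n m R) (v : m → R) (u : n → R) (z : m → R) :
    w ⬝ᵥ ((X * vecMulVec v u * Y) *ᵥ z) = (w ⬝ᵥ (X *ᵥ v)) * (u ⬝ᵥ (Y *ᵥ z)) := by
  rw [Matrix.mul_assoc, ← mulVec_mulVec, ← mulVec_mulVec, vecMulVec_mulVec, op_smul_eq_smul,
    mulVec_smul, dotProduct_smul, smul_eq_mul, mul_comm]

theorem dotProduct_prod_vecMulVec_mul_mulVec [Fintype m] [DecidableEq m] (u v : m → R) :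
    ∀ {k : ℕ} (B : Fin (k + 1) → Matrix m m R),
      v ⬝ᵥ ((B 0 * (List.ofFn fun i : Fin k => vecMulVec u v * B i.succ).prod) *ᵥ u)
        = ∏ i, v ⬝ᵥ (B i *ᵥ u)
  | 0, B => by simp
  | k + 1, B => by
    have ih := dotProduct_prod_vecMulVec_mul_mulVec u v fun i : Fin (k + 1) => B i.succ
    simp only [List.ofFn_succ, List.prod_cons, Fin.succ_zero_eq_one] at ih ⊢
    rw [← Matrix.mul_assoc, ← Matrix.mul_assoc, Matrix.mul_assoc (B 0 * _),
      dotProduct_mul_vecMulVec_mul_mulVec, ih, Fin.prod_univ_succ (n := k + 1)]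

end Matrix

theorem kronecker_monotone_independence_general {n m : ℕ} (k : ℕ)
    (ξ : Fin n → ℂ)
    (η : Fin m → ℂ)
    (E : Matrix (Fin m) (Fin m) ℂ) (hE : E = Matrix.vecMulVec η (star η))
    (ζ : Fin n × Fin m → ℂ) (hζ : ζ = fun p => ξ p.1 * η p.2)
    (A : Fin k → Matrix (Fin n) (Fin n) ℂ) (B : Fin (k + 1) → Matrix (Fin m) (Fin m) ℂ) :
    star ζ ⬝ᵥ
        ((((1 : Matrix (Fin n) (Fin n) ℂ) ⊗ₖ B 0) *
            (List.ofFn fun i : Fin k =>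
              (A i ⊗ₖ E) * ((1 : Matrix (Fin n) (Fin n) ℂ) ⊗ₖ B i.succ)).prod) *ᵥ ζ)
      = (∏ i : Fin (k + 1), star η ⬝ᵥ (B i *ᵥ η)) *
          (star ξ ⬝ᵥ ((List.ofFn fun i : Fin k => A i).prod *ᵥ ξ)) := by
  subst hζ hE
  have word_eq_kronecker :
      (1 ⊗ₖ B 0) *
          (List.ofFn fun i : Fin k => (A i ⊗ₖ vecMulVec η (star η)) * (1 ⊗ₖ B i.succ)).prod
        = (List.ofFn A).prod ⊗ₖ
            (B 0 * (List.ofFn fun i : Fin k => vecMulVec η (star η) * B i.succ).prod) := by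
    simp only [← mul_kronecker_mul, mul_one]
    rw [list_prod_ofFn_kronecker, ← mul_kronecker_mul, one_mul]
  rw [word_eq_kronecker, kronecker_mulVec_mul, star_mul_dotProduct_mul,
    dotProduct_prod_vecMulVec_mul_mulVec, mul_comm]

/-- **Quantum monotone independence of full matrix algebras.** For unit vectors `ξ`, `η`, the
rank-one projection `E = |η⟩⟨η|` and the product unit vector `ζ = ξ ⊗ η`, the vector state of
any alternating word `(1 ⊗ₖ B₀)(A₁ ⊗ₖ E)(1 ⊗ₖ B₁) ⋯ (A_k ⊗ₖ E)(1 ⊗ₖ B_k)` factorizes as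
`(∏ᵢ ⟨η, Bᵢη⟩) · ⟨ξ, A₁⋯A_k ξ⟩`: the ordered pair of algebras `({A ⊗ₖ E}, {1 ⊗ₖ B})` is
monotone independent in the vector state given by `ζ`. -/
theorem kronecker_monotone_independence {n m : ℕ} (k : ℕ) (hk : 1 ≤ k)
    (ξ : Fin n → ℂ) (hξ : star ξ ⬝ᵥ ξ = 1)
    (η : Fin m → ℂ) (hη : star η ⬝ᵥ η = 1)
    (E : Matrix (Fin m) (Fin m) ℂ) (hE : E = Matrix.vecMulVec η (star η))
    (ζ : Fin n × Fin m → ℂ) (hζ : ζ = fun p => ξ p.1 * η p.2)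
    (A : Fin k → Matrix (Fin n) (Fin n) ℂ) (B : Fin (k + 1) → Matrix (Fin m) (Fin m) ℂ) :
    star ζ ⬝ᵥ
        ((((1 : Matrix (Fin n) (Fin n) ℂ) ⊗ₖ B 0) *
            (List.ofFn fun i : Fin k =>
              (A i ⊗ₖ E) * ((1 : Matrix (Fin n) (Fin n) ℂ) ⊗ₖ B i.succ)).prod) *ᵥ ζ)
      = (∏ i : Fin (k + 1), star η ⬝ᵥ (B i *ᵥ η)) *
          (star ξ ⬝ᵥ ((List.ofFn fun i : Fin k => A i).prod *ᵥ ξ)) :=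
  kronecker_monotone_independence_general k ξ η E hE ζ hζ A B
end
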